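/- Let Σ be an alphabet of cardinality n ≥ 1 and let k ≥ 1. If w is a word over Σ such that sub_k(w) = Σ^{≤k} (every word of length at most k is a subword of w) and any two distinct prefixes w1, w2 of w satisfy sub_k(w1) ≠ sub_k(w2), then |w| ≤ C(k+n, k) − 1, where C denotes the binomial coefficient. -/

import Mathlib

/-- `subk k w` is the set of scattered subwords of `w` of length at most `k`. -/
def subk {α : Type*} (k : ℕ) (w : List α) : Set (List α) :=
  {u | u.length ≤ k ∧ u.Sublist w}

/-- Two words are `k`-equivalent if they have the same subwords of length at most `k`. -/
def kEquiv {α : Type*} (k : ℕ) (u v : List α) : Prop :=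
  subk k u = subk k v

/-- A language is `k`-piecewise testable (Simon's characterization):
`k`-equivalent words are equi-members. -/
def IsPT {α : Type*} (k : ℕ) (L : Language α) : Prop :=
  ∀ u v : List α, kEquiv k u v → (u ∈ L ↔ v ∈ L)

/-- A DFA is minimal if all states are reachable and pairwise distinguishable. -/
def IsMinimalDFA {α σ : Type*} (A : DFA α σ) : Prop :=
  (∀ q : σ, ∃ w : List α, A.eval w = q) ∧
  ∀ p q : σ,
    (∀ w : List α, (A.evalFrom p w ∈ A.accept ↔ A.evalFrom q w ∈ A.accept)) → p = q

/-- There is a simple path (pairwise distinct states) with `m` transitions in the DFA `A`. -/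
def DFAHasSimplePath {α σ : Type*} (A : DFA α σ) (m : ℕ) : Prop :=
  ∃ (qs : Fin (m + 1) → σ) (as : Fin m → α),
    Function.Injective qs ∧ ∀ i : Fin m, A.step (qs i.castSucc) (as i) = qs i.succ

/-- The depth of a DFA: the number of transitions on a longest simple path. -/
noncomputable def dfaDepth {α σ : Type*} (A : DFA α σ) : ℕ :=
  sSup {m | DFAHasSimplePath A m}

/-- There is a simple path (pairwise distinct states) with `m` transitions in the NFA `A`. -/
def NFAHasSimplePath {α σ : Type*} (A : NFA α σ) (m : ℕ) : Prop :=
  ∃ (qs : Fin (m + 1) → σ) (as : Fin m → α),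
    Function.Injective qs ∧ ∀ i : Fin m, qs i.succ ∈ A.step (qs i.castSucc) (as i)

/-- The depth of an NFA: the number of transitions on a longest simple path. -/
noncomputable def nfaDepth {α σ : Type*} (A : NFA α σ) : ℕ :=
  sSup {m | NFAHasSimplePath A m}

/-!
Split a word `w` over a letter set `S` at the first occurrence of the letter `s` whose first
occurrence comes last: `w = B ++ s :: r`. The prefix `B` avoids `s`, so it is a word over `|S| - 1`
letters. Every letter of `r` already occurs in `B ++ [s]`, which lets a subword of length `k`
that is new in a prefix of `r` be lifted to a subword of length `k + 1` that is new in the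
corresponding prefix of `w`. Induction on `k` and `|S|` then gives
`|w| + 1 ≤ C(|S| + k - 1, k) + C(|S| + k - 1, k - 1) = C(|S| + k, k)` by Pascal's rule.
-/

open List

theorem eq_nil_of_injOn_subk_zero {α : Type*} {w : List α}
    (hw : Set.InjOn (subk 0) {u | u <+: w}) : w = [] :=
  (hw (nil_prefix (l := w)) (prefix_refl w) (by ext x; simp +contextual [subk])).symm

/-- A subword of `A ++ v` either uses a letter of `A`, leaving at most `k` letters inside `v`,
or lies inside `v`, and then its first letter can be matched in `A` instead. -/
theorem subk_succ_append_eq_of_sublist {α : Type*} {k : ℕ} {A u v : List α} (huv : u <+ v)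
    (hvA : ∀ c ∈ v, c ∈ A) (h : subk k u = subk k v) :
    subk (k + 1) (A ++ u) = subk (k + 1) (A ++ v) := by
  have hshort : ∀ z, z <+ v → z.length ≤ k → z <+ u := fun z hz hlen =>
    (h ▸ (⟨hlen, hz⟩ : z ∈ subk k v) : z ∈ subk k u).2
  refine Set.Subset.antisymm (fun x hx => ⟨hx.1, hx.2.trans (huv.append_left A)⟩) ?_
  rintro x ⟨hlen, hx⟩
  obtain ⟨y, z, rfl, hy, hz⟩ := sublist_append_iff.1 hx
  refine ⟨hlen, ?_⟩
  rcases y with _ | ⟨c, y⟩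
  · rcases z with _ | ⟨c, z⟩
    · exact nil_sublist _
    · have hc : c ∈ A := hvA c (hz.subset mem_cons_self)
      exact (singleton_sublist.2 hc).append
        (hshort z (sublist_of_cons_sublist hz) (by simp at hlen; omega))
  · exact hy.append (hshort z hz (by simp at hlen; omega))

theorem injOn_subk_prefix_of_append {α : Type*} {k : ℕ} {A r : List α}
    (hrA : ∀ c ∈ r, c ∈ A) (h : Set.InjOn (subk (k + 1)) {u | u <+: A ++ r}) :
    Set.InjOn (subk k) {u | u <+: r} := by
  have hlift : ∀ {u v : List α}, u <+: r → v <+: r → u <+: v → subk k u = subk k v → u = v :=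
    fun hu hv huv heq => (append_right_inj A).1 <|
      h (prefix_append_right_inj A |>.2 hu) (prefix_append_right_inj A |>.2 hv)
        (subk_succ_append_eq_of_sublist huv.sublist (fun c hc => hrA c (hv.subset hc)) heq)
  intro u hu v hv heq
  rcases prefix_or_prefix_of_prefix hu hv with huv | hvu
  · exact hlift hu hv huv heq
  · exact (hlift hv hu hvu heq.symm).symm

theorem exists_eq_append_cons_of_forall_mem {α : Type*} {S : Set α} (hS : S.Nonempty)
    {w : List α} (hw : ∀ c ∈ S, c ∈ w) :
    ∃ B s r, w = B ++ s :: r ∧ s ∈ S ∧ s ∉ B ∧ ∀ c ∈ S, c ∈ B ++ [s] := by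
  induction w using List.reverseRecOn with
  | nil =>
    obtain ⟨c, hc⟩ := hS
    exact absurd (hw c hc) not_mem_nil
  | append_singleton w a ih =>
    by_cases hall : ∀ c ∈ S, c ∈ w
    · obtain ⟨B, s, r, rfl, hsS, hsB, hBs⟩ := ih hall
      exact ⟨B, s, r ++ [a], by simp, hsS, hsB, hBs⟩
    · push Not at hall
      obtain ⟨s, hsS, hsw⟩ := hall
      obtain rfl : s = a := by simpa [hsw] using hw s hsS
      exact ⟨w, s, [], by simp, hsS, hsw, hw⟩

theorem length_lt_choose_of_injOn_subk {α : Type*} [DecidableEq α] (k : ℕ) (S : Finset α)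
    (w : List α) (hwS : ∀ a ∈ w, a ∈ S) (hw : Set.InjOn (subk k) {u | u <+: w}) :
    w.length < (S.card + k).choose k := by
  induction k generalizing S w with
  | zero => simp [eq_nil_of_injOn_subk_zero hw]
  | succ k ihk =>
    induction S using Finset.strongInduction generalizing w with
    | H S ihS =>
    by_cases hall : ∀ s ∈ S, s ∈ w
    · rcases S.eq_empty_or_nonempty with rfl | hS
      · simp [eq_nil_iff_forall_not_mem.2 fun a ha => Finset.notMem_empty a (hwS a ha)]
      obtain ⟨B, s, r, rfl, hsS, hsB, hBs⟩ :=
        exists_eq_append_cons_of_forall_mem (S := (S : Set α)) hS hall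
      have hB : B.length < ((S.erase s).card + (k + 1)).choose (k + 1) :=
        ihS _ (Finset.erase_ssubset hsS) B
          (fun a ha => Finset.mem_erase.2 ⟨ne_of_mem_of_not_mem ha hsB, hwS a (by simp [ha])⟩)
          (hw.mono fun u hu => hu.trans (prefix_append B _))
      have hr : r.length < (S.card + k).choose k := by
        refine ihk S r (fun a ha => hwS a (by simp [ha])) ?_
        refine injOn_subk_prefix_of_append (A := B ++ [s])
          (fun c hc => hBs c (hwS c (by simp [hc]))) ?_
        simpa using hw
      have hpascal : (S.card + (k + 1)).choose (k + 1)
          = ((S.erase s).card + (k + 1)).choose (k + 1) + (S.card + k).choose k := by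
        rw [← Finset.card_erase_add_one hsS,
          show (S.erase s).card + 1 + (k + 1) = (S.erase s).card + (k + 1) + 1 by omega,
          show (S.erase s).card + 1 + k = (S.erase s).card + (k + 1) by omega,
          Nat.choose_succ_succ', add_comm]
      simp only [length_append, length_cons]
      omega
    · push Not at hall
      obtain ⟨s, hsS, hsw⟩ := hall
      calc w.length < ((S.erase s).card + (k + 1)).choose (k + 1) :=
            ihS _ (Finset.erase_ssubset hsS) w
              (fun a ha => Finset.mem_erase.2 ⟨ne_of_mem_of_not_mem ha hsw, hwS a ha⟩) hw
        _ ≤ (S.card + (k + 1)).choose (k + 1) :=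
            Nat.choose_le_choose _ (by have := Finset.card_erase_le (s := S) (a := s); omega)

theorem stmt16 {α : Type*} [Fintype α] (k n : ℕ)
    (hcard : Fintype.card α = n) (w : List α)
    (hpref : ∀ w1 w2 : List α, w1 <+: w → w2 <+: w → subk k w1 = subk k w2 → w1 = w2) :
    w.length ≤ Nat.choose (k + n) k - 1 := by
  classical
  have h := length_lt_choose_of_injOn_subk k Finset.univ w (fun a _ => Finset.mem_univ a)
    (fun u hu v hv => hpref u v hu hv)
  rw [Finset.card_univ, hcard, add_comm] at h
  exact Nat.le_sub_one_of_lt h
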